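/- If x ∼ N(a, A) on ℝⁿ and, conditionally on x, y ∼ N(Hx + c, B) on ℝᵐ, then the pair (x,y) is jointly Gaussian with mean (a, Ha + c) and covariance [[A, AHᵀ],[HA, HAHᵀ + B]]. -/

import Mathlib

open Matrix MeasureTheory ProbabilityTheory Real

/-- `X` is a Gaussian random vector (under the measure `P`) with mean `m` and
covariance matrix `S`: every linear functional of `X` is a real Gaussian with
the corresponding mean and variance. -/
def IsGaussianVec {Ω ι : Type*} [MeasurableSpace Ω] [Fintype ι]
    (P : Measure Ω) (X : Ω → ι → ℝ) (m : ι → ℝ) (S : Matrix ι ι ℝ) : Prop :=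
  ∀ a : ι → ℝ,
    Measure.map (fun ω => a ⬝ᵥ X ω) P =
      gaussianReal (a ⬝ᵥ m) (Real.toNNReal (a ⬝ᵥ (S *ᵥ a)))

/-! The pair `(x, v)` of independent Gaussian vectors is jointly Gaussian with block-diagonal
covariance `diag(A, B)`: `⟨(w₁, w₂), (x, v)⟩ = ⟨w₁, x⟩ + ⟨w₂, v⟩` is a sum of independent real
Gaussians, whose means and variances add. Then `(x, y) = L (x, v) + (0, c)` with `L = [[1, 0], [H, 1]]`, and an
affine image of a Gaussian vector is Gaussian with covariance
`L diag(A, B) Lᵀ = [[A, AHᵀ], [HA, HAHᵀ + B]]`. -/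

namespace IsGaussianVec

variable {Ω ι κ : Type*} [MeasurableSpace Ω] [Fintype ι] [Fintype κ] {P : Measure Ω}

theorem mulVec {X : Ω → ι → ℝ} {a : ι → ℝ} {A : Matrix ι ι ℝ} (hX : IsGaussianVec P X a A)
    (M : Matrix κ ι ℝ) :
    IsGaussianVec P (fun ω => M *ᵥ X ω) (M *ᵥ a) (M * A * Mᵀ) := by
  intro w
  simpa only [dotProduct_mulVec, ← mulVec_mulVec, mulVec_transpose] using hX (w ᵥ* M)

theorem add_const {X : Ω → ι → ℝ} {a : ι → ℝ} {A : Matrix ι ι ℝ} (hX : IsGaussianVec P X a A)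
    (c : ι → ℝ) :
    IsGaussianVec P (fun ω => X ω + c) (a + c) A := by
  intro w
  have hmeas : AEMeasurable (fun ω => w ⬝ᵥ X ω) P :=
    .of_map_ne_zero (by rw [hX w]; exact NeZero.ne _)
  calc Measure.map (fun ω => w ⬝ᵥ (X ω + c)) P
      = (Measure.map (fun ω => w ⬝ᵥ X ω) P).map (· + w ⬝ᵥ c) := by
        rw [AEMeasurable.map_map_of_aemeasurable (by fun_prop) hmeas]
        simp only [Function.comp_def, dotProduct_add]
    _ = _ := by rw [hX w, gaussianReal_map_add_const, dotProduct_add]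

theorem sumElim_of_indepFun {X : Ω → ι → ℝ} {Y : Ω → κ → ℝ} {a : ι → ℝ} {b : κ → ℝ}
    {A : Matrix ι ι ℝ} {B : Matrix κ κ ℝ} (hA : A.PosSemidef) (hB : B.PosSemidef)
    (hX : IsGaussianVec P X a A) (hY : IsGaussianVec P Y b B) (hXY : IndepFun X Y P) :
    IsGaussianVec P (fun ω => Sum.elim (X ω) (Y ω)) (Sum.elim a b) (fromBlocks A 0 0 B) := by
  intro w
  rw [← Sum.elim_comp_inl_inr w]
  set u := w ∘ Sum.inl
  set v := w ∘ Sum.inr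
  have hind : IndepFun (fun ω => u ⬝ᵥ X ω) (fun ω => v ⬝ᵥ Y ω) P :=
    hXY.comp (φ := (u ⬝ᵥ ·)) (ψ := (v ⬝ᵥ ·)) (by fun_prop) (by fun_prop)
  have hquad : Sum.elim u v ⬝ᵥ (fromBlocks A 0 0 B *ᵥ Sum.elim u v)
      = u ⬝ᵥ (A *ᵥ u) + v ⬝ᵥ (B *ᵥ v) := by
    simp [fromBlocks_mulVec, sumElim_dotProduct_sumElim]
  simp only [sumElim_dotProduct_sumElim, hquad,
    toNNReal_add (by simpa using hA.dotProduct_mulVec_nonneg u)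
      (by simpa using hB.dotProduct_mulVec_nonneg v)]
  exact gaussianReal_add_gaussianReal_of_indepFun hind (hX u) (hY v)

end IsGaussianVec

theorem joint_gaussian_of_conditional_gaussian_general {Ω : Type*} [MeasurableSpace Ω]
    (P : Measure Ω)
    {n m : ℕ} (X : Ω → Fin n → ℝ) (V : Ω → Fin m → ℝ)
    (a : Fin n → ℝ) (c : Fin m → ℝ)
    (A : Matrix (Fin n) (Fin n) ℝ) (B : Matrix (Fin m) (Fin m) ℝ)
    (H : Matrix (Fin m) (Fin n) ℝ)
    (hA : A.PosSemidef) (hB : B.PosSemidef)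
    (hX : IsGaussianVec P X a A) (hV : IsGaussianVec P V 0 B)
    (hindep : IndepFun X V P) :
    IsGaussianVec P (fun ω => Sum.elim (X ω) (H *ᵥ X ω + c + V ω))
      (Sum.elim a (H *ᵥ a + c))
      (Matrix.fromBlocks A (A * Hᵀ) (H * A) (H * A * Hᵀ + B)) := by
  set L : Matrix (Fin n ⊕ Fin m) (Fin n ⊕ Fin m) ℝ := fromBlocks 1 0 H 1
  have hXV := hX.sumElim_of_indepFun hA hB hV hindep
  have hpath : (fun ω => L *ᵥ Sum.elim (X ω) (V ω) + Sum.elim (0 : Fin n → ℝ) c)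
      = fun ω => Sum.elim (X ω) (H *ᵥ X ω + c + V ω) := by
    funext ω
    ext (i | i) <;> simp [L, fromBlocks_mulVec, add_right_comm]
  have hmean : L *ᵥ Sum.elim a 0 + Sum.elim (0 : Fin n → ℝ) c = Sum.elim a (H *ᵥ a + c) := by
    ext (i | i) <;> simp [L, fromBlocks_mulVec]
  have hcov : L * fromBlocks A 0 0 B * Lᵀ = fromBlocks A (A * Hᵀ) (H * A) (H * A * Hᵀ + B) := by
    simp [L, fromBlocks_multiply, fromBlocks_transpose]
  simpa only [hpath, hmean, hcov] using (hXV.mulVec L).add_const (Sum.elim 0 c)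

/-- If `x ∼ N(a, A)` and, conditionally on `x`, `y ∼ N(Hx + c, B)`
(i.e. `y = Hx + c + v` with `v ∼ N(0, B)` independent of `x`), then `(x, y)` is
jointly Gaussian with mean `(a, Ha + c)` and covariance
`[[A, AHᵀ], [HA, HAHᵀ + B]]`. -/
theorem joint_gaussian_of_conditional_gaussian {Ω : Type*} [MeasurableSpace Ω]
    (P : Measure Ω) [IsProbabilityMeasure P]
    {n m : ℕ} (X : Ω → Fin n → ℝ) (V : Ω → Fin m → ℝ)
    (a : Fin n → ℝ) (c : Fin m → ℝ)
    (A : Matrix (Fin n) (Fin n) ℝ) (B : Matrix (Fin m) (Fin m) ℝ)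
    (H : Matrix (Fin m) (Fin n) ℝ)
    (hA : A.PosSemidef) (hB : B.PosSemidef)
    (hmX : Measurable X) (hmV : Measurable V)
    (hX : IsGaussianVec P X a A) (hV : IsGaussianVec P V 0 B)
    (hindep : IndepFun X V P) :
    IsGaussianVec P (fun ω => Sum.elim (X ω) (H *ᵥ X ω + c + V ω))
      (Sum.elim a (H *ᵥ a + c))
      (Matrix.fromBlocks A (A * Hᵀ) (H * A) (H * A * Hᵀ + B)) :=
  joint_gaussian_of_conditional_gaussian_general P X V a c A B H hA hB hX hV hindep
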